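/- arXiv:2505.07243 — 2 statements merged into one kernel-verified Lean document; each statement's English description precedes it below -/
import Mathlib

section
/- Logarithmic cosine inequality: for every real number x with -π < x < π, one has Real.log ((Real.cos (x/2))^2) ≤ -x²/4. Equivalently, the function f(x) = log(cos²(x/2)) + x²/4 is nonpositive on the open interval (-π, π), attaining its maximum value 0 uniquely at x = 0. -/
/-!
The function `f t = log (cos t) + t² / 2` vanishes at `0` and has derivative `t - tan t`, which
is nonpositive on `[0, π/2)` since `t ≤ tan t` there. Hence `f ≤ 0` on `[0, π/2)`, and by evenness
on `(-π/2, π/2)`. Taking `t = x / 2` and doubling gives the claim.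
-/

open Real Set

theorem hasDerivAt_log_cos_add_sq_div_two {t : ℝ} (ht : cos t ≠ 0) :
    HasDerivAt (fun s ↦ log (cos s) + s ^ 2 / 2) (t - tan t) t := by
  have hlog : HasDerivAt (fun s ↦ log (cos s)) (-tan t) t := by
    simpa [tan_eq_sin_div_cos, neg_div] using (hasDerivAt_cos t).log ht
  have hsq : HasDerivAt (fun s : ℝ ↦ s ^ 2 / 2) t t := by
    simpa using (hasDerivAt_pow 2 t).div_const 2
  simpa only [neg_add_eq_sub] using hlog.fun_add hsq

theorem antitoneOn_log_cos_add_sq_div_two :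
    AntitoneOn (fun s ↦ log (cos s) + s ^ 2 / 2) (Ico 0 (π / 2)) := by
  have hcos {s : ℝ} (hs : s ∈ Ico 0 (π / 2)) : cos s ≠ 0 :=
    (cos_pos_of_mem_Ioo ⟨by linarith [hs.1, pi_pos], hs.2⟩).ne'
  refine antitoneOn_of_hasDerivWithinAt_nonpos (f' := fun s ↦ s - tan s) (convex_Ico 0 (π / 2))
    (fun s hs ↦ (hasDerivAt_log_cos_add_sq_div_two (hcos hs)).continuousAt.continuousWithinAt)
    (fun s hs ↦ ?_) (fun s hs ↦ ?_)
  all_goals rw [interior_Ico] at hs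
  · exact (hasDerivAt_log_cos_add_sq_div_two (hcos (Ioo_subset_Ico_self hs))).hasDerivWithinAt
  · linarith [le_tan hs.1.le hs.2]

theorem log_cos_le_neg_sq_div_two {t : ℝ} (ht : |t| < π / 2) : log (cos t) ≤ -t ^ 2 / 2 := by
  have hmem : |t| ∈ Ico 0 (π / 2) := ⟨abs_nonneg t, ht⟩
  have hle := antitoneOn_log_cos_add_sq_div_two (left_mem_Ico.2 (by positivity)) hmem hmem.1
  simp only [cos_abs, sq_abs, cos_zero, log_one] at hle
  linarith

/-- Logarithmic cosine inequality: for every real `x` with `-π < x < π`,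
`log (cos²(x/2)) ≤ -x²/4`. -/
theorem log_cos_sq_le (x : ℝ) (hx1 : -Real.pi < x) (hx2 : x < Real.pi) :
    Real.log ((Real.cos (x / 2)) ^ 2) ≤ -x ^ 2 / 4 := by
  have hhalf : |x / 2| < π / 2 := by
    rw [abs_div, abs_two, div_lt_div_iff_of_pos_right two_pos, abs_lt]
    exact ⟨hx1, hx2⟩
  calc log (cos (x / 2) ^ 2) = 2 * log (cos (x / 2)) := by rw [log_pow]; norm_num
    _ ≤ 2 * (-(x / 2) ^ 2 / 2) := by gcongr; exact log_cos_le_neg_sq_div_two hhalf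
    _ = -x ^ 2 / 4 := by ring
end

section
/- Asymptotic bound for the number of repetitions N_tv (Proposition on N_tv, second part): for all real numbers α and Δθ with 0 < α < 1, -π < Δθ < π and Δθ ≠ 0, the lower bound for the repetition count satisfies (Real.log α) / (Real.log ((Real.cos (Δθ/2))^2)) ≤ (-4 * Real.log α) / Δθ², i.e., it is at most 4·ln(1/α)/Δθ²; hence N_tv chosen at this lower bound is O(log(1/α)/(Δθ)²). -/
open Real

/-- Key analytic inequality: `log (cos y) ≤ -y²/2` for `0 ≤ y < π/2`. -/
lemma log_cos_le_neg_sq_div_two_s6 {y : ℝ} (hy0 : 0 ≤ y) (hy : y < Real.pi / 2) :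
    Real.log (Real.cos y) ≤ -(y ^ 2) / 2 := by
  have key : AntitoneOn (fun x : ℝ => Real.log (Real.cos x) + x ^ 2 / 2)
      (Set.Icc 0 y) := by
    apply antitoneOn_of_deriv_nonpos (convex_Icc 0 y)
    · apply ContinuousOn.add
      · apply ContinuousOn.log (Real.continuous_cos.continuousOn)
        intro x hx
        exact (Real.cos_pos_of_mem_Ioo ⟨by linarith [hx.1, Real.pi_pos], by
          linarith [hx.2]⟩).ne'
      · fun_prop
    · intro x hx
      rw [interior_Icc] at hx
      have hcos : 0 < Real.cos x :=
        Real.cos_pos_of_mem_Ioo ⟨by linarith [hx.1, Real.pi_pos], by linarith [hx.2]⟩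
      exact (((Real.hasDerivAt_cos x).log hcos.ne').add
        ((hasDerivAt_pow 2 x).div_const 2)).differentiableAt.differentiableWithinAt
    · intro x hx
      rw [interior_Icc] at hx
      have hcos : 0 < Real.cos x :=
        Real.cos_pos_of_mem_Ioo ⟨by linarith [hx.1, Real.pi_pos], by linarith [hx.2]⟩
      have hd : HasDerivAt (fun x : ℝ => Real.log (Real.cos x) + x ^ 2 / 2)
          (-Real.sin x / Real.cos x + (2 : ℕ) * x ^ 1 / 2) x :=
        ((Real.hasDerivAt_cos x).log hcos.ne').add ((hasDerivAt_pow 2 x).div_const 2)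
      rw [hd.deriv]
      have htan : x ≤ Real.tan x := Real.le_tan (le_of_lt hx.1) (by linarith [hx.2])
      rw [Real.tan_eq_sin_div_cos] at htan
      have : -Real.sin x / Real.cos x ≤ -x := by
        rw [neg_div]; linarith
      simp only [pow_one]
      push_cast
      linarith
  have h := key (Set.left_mem_Icc.mpr hy0) (Set.right_mem_Icc.mpr hy0) hy0
  simp only [Real.cos_zero, Real.log_one] at h
  have : (0:ℝ) ^ 2 / 2 = 0 := by norm_num
  rw [this] at h
  linarith

/-- Asymptotic bound for the number of repetitions `N_tv`: for `0 < α < 1` and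
`Δθ ∈ (-π, π) \ {0}`, the lower bound `ln α / ln (cos²(Δθ/2))` for the
repetition count is at most `4 · ln(1/α) / Δθ² = (-4 · ln α) / Δθ²`. -/
theorem Ntv_asymptotic_bound (α Δθ : ℝ) (hα0 : 0 < α) (hα1 : α < 1)
    (h1 : -Real.pi < Δθ) (h2 : Δθ < Real.pi) (h0 : Δθ ≠ 0) :
    Real.log α / Real.log ((Real.cos (Δθ / 2)) ^ 2)
      ≤ (-4 * Real.log α) / Δθ ^ 2 := by
  set x := Δθ / 2 with hx
  have hxabs0 : 0 ≤ |x| := abs_nonneg x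
  have hxabs : |x| < Real.pi / 2 := by
    rw [abs_lt]; constructor <;> [linarith; linarith]
  have hxne : x ≠ 0 := by simp [hx, h0]
  have hcos : Real.cos x = Real.cos |x| := (Real.cos_abs x).symm
  have hcospos : 0 < Real.cos x := by
    apply Real.cos_pos_of_mem_Ioo
    constructor <;> [linarith [abs_lt.mp hxabs]; linarith [abs_lt.mp hxabs]]
  -- log (cos x ^ 2) ≤ -x^2
  have hkey : Real.log ((Real.cos x) ^ 2) ≤ -(x ^ 2) := by
    rw [Real.log_pow]
    have := log_cos_le_neg_sq_div_two_s6 hxabs0 hxabs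
    rw [← hcos, sq_abs] at this
    push_cast
    linarith
  have hx2pos : 0 < x ^ 2 := pow_pos (abs_pos.mpr hxne) 2 |>.trans_le (by rw [sq_abs])
  have hLneg : Real.log ((Real.cos x) ^ 2) < 0 := lt_of_le_of_lt hkey (by linarith)
  have hA : 0 < -Real.log α := by
    have := Real.log_neg hα0 hα1; linarith
  -- rewrite both sides
  have hgoal : Real.log α / Real.log ((Real.cos x) ^ 2)
      = (-Real.log α) / (-Real.log ((Real.cos x) ^ 2)) := by
    rw [neg_div_neg_eq]
  rw [hgoal]
  have hΔ : Δθ ^ 2 = 4 * x ^ 2 := by rw [hx]; ring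
  rw [hΔ]
  have h4 : (-4 * Real.log α) / (4 * x ^ 2) = (-Real.log α) / x ^ 2 := by
    field_simp
  rw [h4]
  apply div_le_div_of_nonneg_left hA.le hx2pos
  linarith
end
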